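/- Let G be a vertex-weighted graph and let a, b be distinct unlooped adjacent vertices. Then q(G) = β(a)·q(G−a) + β(b)·q(G^{ab}−b) + (α(a)α(b)(x−1)² − β(a)β(b))·q(G^{ab}−a−b), where G^{ab} is the pivot of G at the edge ab. -/

import Mathlib

open Finset

/-- GF(2) rank of the adjacency matrix of the induced subgraph on `S`. -/
noncomputable def mrank {V : Type} [Fintype V] [DecidableEq V]
    (M : Matrix V V (ZMod 2)) (S : Finset V) : ℕ :=
  (Matrix.of (fun i j : {v // v ∈ S} => M i.1 j.1)).rank

/-- The weighted interlace polynomial of the graph with adjacency matrix `M`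
restricted to the vertex set `U`, with vertex weights `α`, `β`, evaluated at `x`, `y`. -/
noncomputable def interlaceQ {V : Type} [Fintype V] [DecidableEq V]
    {R : Type} [CommRing R] (M : Matrix V V (ZMod 2)) (U : Finset V)
    (α β : V → R) (x y : R) : R :=
  ∑ S ∈ U.powerset, (∏ s ∈ S, α s) * (∏ v ∈ U \ S, β v) *
    (x - 1) ^ mrank M S * (y - 1) ^ (S.card - mrank M S)

/-- Local complementation at `a`: toggle adjacencies (including loops) among
neighbors of `a` distinct from `a`. -/
def localComp {V : Type} [DecidableEq V] (M : Matrix V V (ZMod 2)) (a : V) :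
    Matrix V V (ZMod 2) :=
  fun i j => if i = a ∨ j = a then M i j else M i j + M i a * M j a

/-- Pivot at the edge `ab`. -/
def pivot {V : Type} [DecidableEq V] (M : Matrix V V (ZMod 2)) (a b : V) :
    Matrix V V (ZMod 2) :=
  fun i j => if i = a ∨ i = b ∨ j = a ∨ j = b then M i j
    else M i j + M i a * M j b + M i b * M j a

open Matrix LinearMap

lemma rank_fromBlocks_diag {K : Type} [Field K] {n m l o : Type}
    [Fintype l] [Fintype m] [Fintype n] [Fintype o]
    (A : Matrix n l K) (D : Matrix m o K) :
    (Matrix.fromBlocks A 0 0 D).rank = A.rank + D.rank := by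
  classical
  have key : ∀ y : n ⊕ m → K, y ∈ range (Matrix.fromBlocks A 0 0 D).mulVecLin ↔
      y ∘ Sum.inl ∈ range A.mulVecLin ∧ y ∘ Sum.inr ∈ range D.mulVecLin := by
    intro y
    constructor
    · rintro ⟨x, rfl⟩
      exact ⟨⟨x ∘ Sum.inl, by funext i; simp [mulVecLin_apply, fromBlocks_mulVec]⟩,
             ⟨x ∘ Sum.inr, by funext i; simp [mulVecLin_apply, fromBlocks_mulVec]⟩⟩
    · rintro ⟨⟨u, hu⟩, ⟨v, hv⟩⟩
      refine ⟨Sum.elim u v, funext fun i => ?_⟩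
      cases i with
      | inl i => simpa [mulVecLin_apply, fromBlocks_mulVec] using congrFun hu i
      | inr i => simpa [mulVecLin_apply, fromBlocks_mulVec] using congrFun hv i
  let e : range (Matrix.fromBlocks A 0 0 D).mulVecLin ≃ₗ[K]
      range A.mulVecLin × range D.mulVecLin :=
  { toFun := fun y => (⟨y.1 ∘ Sum.inl, ((key y.1).1 y.2).1⟩,
                       ⟨y.1 ∘ Sum.inr, ((key y.1).1 y.2).2⟩)
    invFun := fun p => ⟨Sum.elim p.1.1 p.2.1,
      (key _).2 ⟨by simpa using p.1.2, by simpa using p.2.2⟩⟩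
    map_add' := fun y z => rfl
    map_smul' := fun c y => rfl
    left_inv := fun y => Subtype.ext (funext fun i => by cases i <;> rfl)
    right_inv := fun p => by ext i <;> rfl }
  rw [Matrix.rank, Matrix.rank, Matrix.rank, e.finrank_eq, Module.finrank_prod]

section Eu
variable {ι : Type} [Fintype ι] [DecidableEq ι]

/-- Elementary "add a multiple of row/column `p`" matrix. -/
def Eu (u : ι → ZMod 2) (p : ι) : Matrix ι ι (ZMod 2) :=
  1 + Matrix.of (fun i j => if j = p then u i else 0)

lemma Eu_mul (u : ι → ZMod 2) (p : ι) (N : Matrix ι ι (ZMod 2)) :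
    Eu u p * N = N + Matrix.of (fun i j => u i * N p j) := by
  unfold Eu
  rw [add_mul, one_mul]
  congr 1
  ext i j
  simp [Matrix.mul_apply, ite_mul]

lemma mul_Eut (u : ι → ZMod 2) (p : ι) (N : Matrix ι ι (ZMod 2)) :
    N * (Eu u p)ᵀ = N + Matrix.of (fun i j => N i p * u j) := by
  unfold Eu
  rw [Matrix.transpose_add, Matrix.transpose_one, mul_add, mul_one]
  congr 1
  ext i j
  simp [Matrix.mul_apply, Matrix.transpose_apply, mul_ite]

lemma conj_apply (u : ι → ZMod 2) (p : ι) (N : Matrix ι ι (ZMod 2)) (i j : ι) :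
    (Eu u p * N * (Eu u p)ᵀ) i j
      = N i j + u i * N p j + N i p * u j + u i * N p p * u j := by
  rw [mul_Eut, Eu_mul]
  simp only [Matrix.add_apply, Matrix.of_apply]
  ring

lemma Eu_mul_Eu {u : ι → ZMod 2} {p : ι} (hup : u p = 0) : Eu u p * Eu u p = 1 := by
  have h2 : ∀ z : ZMod 2, z + z = 0 := by decide
  rw [Eu_mul]
  ext i j
  simp only [Matrix.add_apply, Matrix.of_apply, Eu, Matrix.one_apply]
  by_cases hj : j = p
  · subst hj
    by_cases hij : i = j
    · subst hij
      simp [hup]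
    · simp only [if_neg hij, eq_self_iff_true, if_true, hup, add_zero, zero_add, mul_one]
      exact h2 (u i)
  · rw [if_neg hj, if_neg hj, if_neg (fun h : p = j => hj h.symm), add_zero, add_zero,
      mul_zero, add_zero]

lemma Eu_det {u : ι → ZMod 2} {p : ι} (hup : u p = 0) : IsUnit (Eu u p).det :=
  IsUnit.of_mul_eq_one _ (by rw [← Matrix.det_mul, Eu_mul_Eu hup, Matrix.det_one])

lemma rank_conj (N E : Matrix ι ι (ZMod 2)) (h : IsUnit E.det) :
    (E * N * Eᵀ).rank = N.rank := by
  rw [Matrix.rank_mul_eq_left_of_isUnit_det Eᵀ (E * N) (by rwa [Matrix.det_transpose]),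
    Matrix.rank_mul_eq_right_of_isUnit_det E N h]

end Eu

section Mrank
variable {V : Type} [Fintype V] [DecidableEq V]

lemma mrank_le_card (M : Matrix V V (ZMod 2)) (S : Finset V) : mrank M S ≤ S.card := by
  have := Matrix.rank_le_card_width (Matrix.of (fun i j : {v // v ∈ S} => M i.1 j.1))
  simpa [mrank, Fintype.card_coe] using this

lemma mrank_pivot_single (M : Matrix V V (ZMod 2)) (hM : M.IsSymm) (a b : V)
    (ha : M a a = 0) {S : Finset V} (haS : a ∈ S) (hbS : b ∉ S) :
    mrank (pivot M a b) S = mrank M S := by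
  classical
  set a' : {v // v ∈ S} := ⟨a, haS⟩ with ha'
  set u : {v // v ∈ S} → ZMod 2 := fun i => if i = a' then 0 else M i.1 b with hu
  have hup : u a' = 0 := if_pos rfl
  set N : Matrix {v // v ∈ S} {v // v ∈ S} (ZMod 2) :=
    Matrix.of (fun i j : {v // v ∈ S} => M i.1 j.1) with hN
  have key : (Matrix.of fun i j : {v // v ∈ S} => pivot M a b i.1 j.1)
      = Eu u a' * N * (Eu u a')ᵀ := by
    ext i j
    rw [conj_apply]
    have hib : i.1 ≠ b := fun h => hbS (h ▸ i.2)
    have hjb : j.1 ≠ b := fun h => hbS (h ▸ j.2)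
    show pivot M a b i.1 j.1
        = M i.1 j.1 + u i * M a j.1 + M i.1 a * u j + u i * M a a * u j
    by_cases hia : i.1 = a
    · have hui : u i = 0 := by rw [show i = a' from Subtype.ext hia]; exact hup
      rw [hui, zero_mul, zero_mul, zero_mul, add_zero, add_zero, hia, ha, zero_mul, add_zero]
      unfold pivot
      rw [if_pos (Or.inl rfl)]
    · by_cases hja : j.1 = a
      · have huj : u j = 0 := by rw [show j = a' from Subtype.ext hja]; exact hup
        rw [huj, mul_zero, mul_zero, add_zero, add_zero, hja, ha, mul_zero, add_zero]
        unfold pivot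
        rw [if_pos (Or.inr (Or.inr (Or.inl rfl)))]
      · have hui : u i = M i.1 b := if_neg (fun h => hia (congrArg Subtype.val h))
        have huj : u j = M j.1 b := if_neg (fun h => hja (congrArg Subtype.val h))
        rw [hui, huj, ha, hM.apply j.1 a]
        unfold pivot
        rw [if_neg (by tauto)]
        ring
  show (Matrix.of fun i j : {v // v ∈ S} => pivot M a b i.1 j.1).rank = N.rank
  rw [key, rank_conj _ _ (Eu_det hup)]

lemma mrank_pivot_pair (M : Matrix V V (ZMod 2)) (hM : M.IsSymm) (a b : V) (hab : a ≠ b)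
    (ha : M a a = 0) (hb : M b b = 0) (hadj : M a b = 1)
    {T : Finset V} (haT : a ∉ T) (hbT : b ∉ T) :
    mrank M (insert a (insert b T)) = mrank (pivot M a b) T + 2 := by
  classical
  have h2 : ∀ z : ZMod 2, z + z = 0 := by decide
  set S : Finset V := insert a (insert b T) with hS
  have haS : a ∈ S := mem_insert_self a _
  have hbS : b ∈ S := mem_insert_of_mem (mem_insert_self b T)
  set a' : {v // v ∈ S} := ⟨a, haS⟩ with ha'
  set b' : {v // v ∈ S} := ⟨b, hbS⟩ with hb'
  set u : {v // v ∈ S} → ZMod 2 := fun i => if i = a' ∨ i = b' then 0 else M i.1 b with hu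
  set w : {v // v ∈ S} → ZMod 2 := fun i => if i = a' ∨ i = b' then 0 else M i.1 a with hw
  have hua : u a' = 0 := if_pos (Or.inl rfl)
  have hub : u b' = 0 := if_pos (Or.inr rfl)
  have hwa : w a' = 0 := if_pos (Or.inl rfl)
  have hwb : w b' = 0 := if_pos (Or.inr rfl)
  set N : Matrix {v // v ∈ S} {v // v ∈ S} (ZMod 2) :=
    Matrix.of (fun i j : {v // v ∈ S} => M i.1 j.1) with hN
  set B0 : Matrix {v // v ∈ S} {v // v ∈ S} (ZMod 2) := Matrix.of (fun i j =>
    if i = a' then (if j = b' then 1 else 0)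
    else if i = b' then (if j = a' then 1 else 0)
    else if j = a' ∨ j = b' then 0 else pivot M a b i.1 j.1) with hB0
  have hba : M b a = 1 := (hM.apply a b).trans hadj
  have hNaa : N a' a' = 0 := ha
  have hNbb : N b' b' = 0 := hb
  have hNab : N a' b' = 1 := hadj
  have hNba : N b' a' = 1 := hba
  have hab' : a' ≠ b' := fun h => hab (congrArg Subtype.val h)
  have key : Eu u a' * (Eu w b' * N * (Eu w b')ᵀ) * (Eu u a')ᵀ = B0 := by
    ext i j
    simp only [conj_apply]
    by_cases hia : i = a'
    · subst hia
      by_cases hja : j = a'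
      · subst hja
        simp [hua, hwa, hNaa, hB0, hab']
      · by_cases hjb : j = b'
        · subst hjb
          simp [hua, hwa, hwb, hub, hNab, hNaa, hB0, hab']
        · have hwj : w j = M j.1 a := if_neg (by tauto)
          have hNj : N a' j = M a j.1 := rfl
          simp only [hua, hwa, hNab, hNaa, hwj, hNj, mul_zero, zero_mul, mul_one, one_mul,
            add_zero, zero_add]
          rw [hB0]
          simp only [Matrix.of_apply, if_pos rfl, if_neg hjb]
          rw [hM.apply j.1 a]
          exact h2 _
    · by_cases hib : i = b'
      · subst hib
        by_cases hja : j = a'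
        · subst hja
          simp [hub, hwb, hua, hwa, hNba, hNbb, hNaa, hNab, hB0, hab', hab'.symm]
        · by_cases hjb : j = b'
          · subst hjb
            simp [hub, hwb, hNbb, hNab, hNba, hB0, hab', hab'.symm]
          · have huj : u j = M j.1 b := if_neg (by tauto)
            have hwj : w j = M j.1 a := if_neg (by tauto)
            have hNj : N b' j = M b j.1 := rfl
            simp only [hub, hwb, hNbb, hNba, hNab, huj, hwj, hNj, mul_zero, zero_mul,
              mul_one, one_mul, add_zero, zero_add]
            rw [hB0]
            simp only [Matrix.of_apply, if_neg hab'.symm, if_pos rfl, if_neg hja, if_neg hjb]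
            rw [hM.apply j.1 b]
            simp only [if_true]
            exact h2 _
      · have hui : u i = M i.1 b := if_neg (by tauto)
        have hwi : w i = M i.1 a := if_neg (by tauto)
        by_cases hja : j = a'
        · subst hja
          simp only [hua, hwa, hNaa, hNab, hNba, hNbb, hui, hwi, mul_zero, zero_mul,
            mul_one, one_mul, add_zero, zero_add]
          rw [hB0]
          simp only [Matrix.of_apply, if_neg hia, if_neg hib, if_pos (Or.inl rfl)]
          rw [show N i a' = M i.1 a from rfl, if_pos (Or.inl trivial)]
          exact h2 _
        · by_cases hjb : j = b'
          · subst hjb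
            simp only [hub, hwb, hNaa, hNab, hNba, hNbb, hui, hwi, mul_zero, zero_mul,
              mul_one, one_mul, add_zero, zero_add]
            rw [hB0]
            simp only [Matrix.of_apply, if_neg hia, if_neg hib, if_pos (Or.inr rfl)]
            rw [show N i b' = M i.1 b from rfl, if_pos (Or.inr trivial)]
            exact h2 _
          · have huj : u j = M j.1 b := if_neg (by tauto)
            have hwj : w j = M j.1 a := if_neg (by tauto)
            simp only [hua, hwa, hNaa, hNab, hNba, hNbb, hui, hwi, huj, hwj, mul_zero,
              zero_mul, mul_one, one_mul, add_zero, zero_add]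
            rw [hB0]
            simp only [Matrix.of_apply, if_neg hia, if_neg hib,
              if_neg (show ¬(j = a' ∨ j = b') by tauto)]
            have hia' : i.1 ≠ a := fun h => hia (Subtype.ext h)
            have hib' : i.1 ≠ b := fun h => hib (Subtype.ext h)
            have hja' : j.1 ≠ a := fun h => hja (Subtype.ext h)
            have hjb' : j.1 ≠ b := fun h => hjb (Subtype.ext h)
            rw [show N i j = M i.1 j.1 from rfl, show N b' j = M b j.1 from rfl,
              show N a' j = M a j.1 from rfl, show N i b' = M i.1 b from rfl,
              show N i a' = M i.1 a from rfl, hM.apply j.1 a, hM.apply j.1 b,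
              h2 (M j.1 a), h2 (M i.1 a), mul_zero, zero_mul, add_zero, add_zero]
            unfold pivot
            rw [if_neg (by simp [hia', hib', hja', hjb'])]
  have h1 : mrank M S = B0.rank := by
    rw [← key, rank_conj _ _ (Eu_det hua), rank_conj _ _ (Eu_det hwb)]
    rfl
  have hmemT : ∀ t : {v // v ∈ T}, t.1 ∈ S := fun t =>
    mem_insert_of_mem (mem_insert_of_mem t.2)
  let e : {v // v ∈ T} ⊕ Fin 2 ≃ {v // v ∈ S} :=
  { toFun := Sum.elim (fun t => ⟨t.1, hmemT t⟩) ![a', b']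
    invFun := fun s => if h1 : s = a' then Sum.inr 0 else if h2 : s = b' then Sum.inr 1
      else Sum.inl ⟨s.1, by
        rcases Finset.mem_insert.1 s.2 with h | h
        · exact absurd (Subtype.ext h) h1
        · rcases Finset.mem_insert.1 h with h' | h'
          · exact absurd (Subtype.ext h') h2
          · exact h'⟩
    left_inv := by
      rintro (t | k)
      · have ht1 : (⟨t.1, hmemT t⟩ : {v // v ∈ S}) ≠ a' := fun h => by
          have h' : (t.1 : V) = a := congrArg Subtype.val h
          exact haT (h' ▸ t.2)
        have ht2 : (⟨t.1, hmemT t⟩ : {v // v ∈ S}) ≠ b' := fun h => by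
          have h' : (t.1 : V) = b := congrArg Subtype.val h
          exact hbT (h' ▸ t.2)
        simp only [Sum.elim_inl]
        simp [ht1, ht2]
      · fin_cases k
        · simp [hab'.symm]
        · simp [hab'.symm]
    right_inv := by
      intro s
      dsimp only
      by_cases hs1 : s = a'
      · rw [dif_pos hs1]
        simp only [Sum.elim_inr, Matrix.cons_val_zero]
        exact hs1.symm
      · by_cases hs2 : s = b'
        · rw [dif_neg hs1, dif_pos hs2]
          simp only [Fin.isValue, Sum.elim_inr, Matrix.cons_val_one, Matrix.head_cons]
          exact hs2.symm
        · rw [dif_neg hs1, dif_neg hs2]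
          exact Subtype.ext rfl }
  have hsub : B0.submatrix e e = Matrix.fromBlocks
      (Matrix.of fun i j : {v // v ∈ T} => pivot M a b i.1 j.1) 0 0
      (!![0, 1; 1, 0] : Matrix (Fin 2) (Fin 2) (ZMod 2)) := by
    ext i j
    have hne1 : ∀ t : {v // v ∈ T}, (⟨t.1, hmemT t⟩ : {v // v ∈ S}) ≠ a' := fun t h => by
      have h' : (t.1 : V) = a := congrArg Subtype.val h
      exact haT (h' ▸ t.2)
    have hne2 : ∀ t : {v // v ∈ T}, (⟨t.1, hmemT t⟩ : {v // v ∈ S}) ≠ b' := fun t h => by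
      have h' : (t.1 : V) = b := congrArg Subtype.val h
      exact hbT (h' ▸ t.2)
    rcases i with i | k
    · rcases j with j | l
      · show B0 ⟨i.1, hmemT i⟩ ⟨j.1, hmemT j⟩ = pivot M a b i.1 j.1
        rw [hB0]
        simp only [Matrix.of_apply, if_neg (hne1 i), if_neg (hne2 i),
          if_neg (show ¬((⟨j.1, hmemT j⟩ : {v // v ∈ S}) = a' ∨
            (⟨j.1, hmemT j⟩ : {v // v ∈ S}) = b') by
            rintro (h | h); exacts [hne1 j h, hne2 j h])]
      · fin_cases l
        · show B0 ⟨i.1, hmemT i⟩ a' = 0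
          rw [hB0]
          simp [hne1 i, hne2 i]
        · show B0 ⟨i.1, hmemT i⟩ b' = 0
          rw [hB0]
          simp [hne1 i, hne2 i]
    · rcases j with j | l
      · fin_cases k
        · show B0 a' ⟨j.1, hmemT j⟩ = 0
          rw [hB0]
          simp [hne1 j, hne2 j]
        · show B0 b' ⟨j.1, hmemT j⟩ = 0
          rw [hB0]
          simp [hne1 j, hne2 j, hab'.symm]
      · fin_cases k <;> fin_cases l
        · show B0 a' a' = 0
          rw [hB0]; simp [hab']
        · show B0 a' b' = 1
          rw [hB0]; simp
        · show B0 b' a' = 1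
          rw [hB0]; simp [hab'.symm]
        · show B0 b' b' = 0
          rw [hB0]; simp [hab'.symm]
  have hA2 : (!![0, 1; 1, 0] : Matrix (Fin 2) (Fin 2) (ZMod 2)).rank = 2 := by
    have hdet : IsUnit (!![0, 1; 1, 0] : Matrix (Fin 2) (Fin 2) (ZMod 2)).det := by
      rw [show (!![0, 1; 1, 0] : Matrix (Fin 2) (Fin 2) (ZMod 2)).det = 1 by decide]
      exact isUnit_one
    rw [Matrix.rank_of_isUnit _ ((Matrix.isUnit_iff_isUnit_det _).2 hdet)]
    simp
  have h3 : B0.rank = mrank (pivot M a b) T + 2 := by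
    rw [← Matrix.rank_submatrix B0 e e, hsub, rank_fromBlocks_diag, hA2]
    rfl
  exact h1.trans h3

end Mrank

theorem pivot_three_term {V : Type} [Fintype V] [DecidableEq V]
    {R : Type} [CommRing R] (M : Matrix V V (ZMod 2)) (hM : M.IsSymm)
    (α β : V → R) (x y : R) (a b : V) (hab : a ≠ b)
    (ha : M a a = 0) (hb : M b b = 0) (hadj : M a b = 1) :
    interlaceQ M Finset.univ α β x y =
      β a * interlaceQ M (Finset.univ.erase a) α β x y +
        β b * interlaceQ (pivot M a b) (Finset.univ.erase b) α β x y +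
        (α a * α b * (x - 1) ^ 2 - β a * β b) *
          interlaceQ (pivot M a b) ((Finset.univ.erase a).erase b) α β x y := by
  classical
  have haU1 : a ∉ Finset.univ.erase a := Finset.notMem_erase a _
  have hbU1 : b ∈ Finset.univ.erase a := Finset.mem_erase.2 ⟨Ne.symm hab, Finset.mem_univ b⟩
  have hbU12 : b ∉ (Finset.univ.erase a).erase b := Finset.notMem_erase b _
  have haU12 : a ∉ (Finset.univ.erase a).erase b :=
    fun h => haU1 (Finset.mem_of_mem_erase h)
  have step1 : (∑ S ∈ (Finset.univ : Finset V).powerset, (∏ s ∈ S, α s) * (∏ v ∈ (Finset.univ : Finset V) \ S, β v) * (x - 1) ^ mrank M S * (y - 1) ^ ((S).card - mrank M S))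
      = (∑ T ∈ (Finset.univ.erase a).powerset, (∏ s ∈ T, α s) * (∏ v ∈ (Finset.univ : Finset V) \ T, β v) * (x - 1) ^ mrank M T * (y - 1) ^ ((T).card - mrank M T))
        + ((∑ T ∈ ((Finset.univ.erase a).erase b).powerset, (∏ s ∈ (insert a T), α s) * (∏ v ∈ (Finset.univ : Finset V) \ (insert a T), β v) * (x - 1) ^ mrank M (insert a T) * (y - 1) ^ (((insert a T)).card - mrank M (insert a T)))
          + (∑ T ∈ ((Finset.univ.erase a).erase b).powerset, (∏ s ∈ (insert a (insert b T)), α s) * (∏ v ∈ (Finset.univ : Finset V) \ (insert a (insert b T)), β v) * (x - 1) ^ mrank M (insert a (insert b T)) * (y - 1) ^ (((insert a (insert b T))).card - mrank M (insert a (insert b T))))) := by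
    rw [show (Finset.univ : Finset V).powerset = (insert a (Finset.univ.erase a)).powerset from
      by rw [Finset.insert_erase (Finset.mem_univ a)], Finset.sum_powerset_insert haU1]
    congr 1
    rw [show (Finset.univ.erase a : Finset V).powerset
        = (insert b ((Finset.univ.erase a).erase b)).powerset from
      by rw [Finset.insert_erase hbU1], Finset.sum_powerset_insert hbU12]
  have hU2s : insert a ((Finset.univ.erase a).erase b) = Finset.univ.erase b := by
    ext v
    simp only [Finset.mem_insert, Finset.mem_erase, Finset.mem_univ, and_true]
    constructor
    · rintro (rfl | ⟨h1, h2⟩)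
      · exact hab
      · exact h1
    · intro h
      rcases eq_or_ne v a with h' | h'
      · exact Or.inl h'
      · exact Or.inr ⟨h, h'⟩
  have stepR : β b * interlaceQ (pivot M a b) (Finset.univ.erase b) α β x y
      = (∑ T ∈ ((Finset.univ.erase a).erase b).powerset, β b * ((∏ s ∈ T, α s) * (∏ v ∈ Finset.univ.erase b \ T, β v) * (x - 1) ^ mrank (pivot M a b) T * (y - 1) ^ ((T).card - mrank (pivot M a b) T)))
        + (∑ T ∈ ((Finset.univ.erase a).erase b).powerset, β b * ((∏ s ∈ (insert a T), α s) * (∏ v ∈ Finset.univ.erase b \ (insert a T), β v) * (x - 1) ^ mrank (pivot M a b) (insert a T) * (y - 1) ^ (((insert a T)).card - mrank (pivot M a b) (insert a T)))) := by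
    rw [show interlaceQ (pivot M a b) (Finset.univ.erase b) α β x y
        = ∑ S ∈ (Finset.univ.erase b : Finset V).powerset, (∏ s ∈ S, α s) * (∏ v ∈ Finset.univ.erase b \ S, β v) * (x - 1) ^ mrank (pivot M a b) S * (y - 1) ^ ((S).card - mrank (pivot M a b) S) from rfl,
      Finset.mul_sum,
      show (Finset.univ.erase b : Finset V).powerset
        = (insert a ((Finset.univ.erase a).erase b)).powerset from by rw [hU2s],
      Finset.sum_powerset_insert haU12]
  have EA : (∑ T ∈ (Finset.univ.erase a).powerset, (∏ s ∈ T, α s) * (∏ v ∈ (Finset.univ : Finset V) \ T, β v) * (x - 1) ^ mrank M T * (y - 1) ^ ((T).card - mrank M T))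
      = β a * interlaceQ M (Finset.univ.erase a) α β x y := by
    rw [show interlaceQ M (Finset.univ.erase a) α β x y
        = ∑ T ∈ (Finset.univ.erase a).powerset, (∏ s ∈ T, α s) * (∏ v ∈ Finset.univ.erase a \ T, β v) * (x - 1) ^ mrank M T * (y - 1) ^ (T.card - mrank M T) from rfl,
      Finset.mul_sum]
    refine Finset.sum_congr rfl fun T hT => ?_
    have haT : a ∉ T := fun h => haU1 (Finset.mem_powerset.1 hT h)
    have hmem : a ∈ (Finset.univ : Finset V) \ T :=
      Finset.mem_sdiff.2 ⟨Finset.mem_univ a, haT⟩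
    rw [← Finset.insert_erase hmem, ← Finset.erase_sdiff_comm,
      Finset.prod_insert (fun h => haU1 (Finset.mem_sdiff.1 h).1)]
    ring
  have EB : (∑ T ∈ ((Finset.univ.erase a).erase b).powerset, (∏ s ∈ (insert a T), α s) * (∏ v ∈ (Finset.univ : Finset V) \ (insert a T), β v) * (x - 1) ^ mrank M (insert a T) * (y - 1) ^ (((insert a T)).card - mrank M (insert a T)))
      = ∑ T ∈ ((Finset.univ.erase a).erase b).powerset, β b * ((∏ s ∈ (insert a T), α s) * (∏ v ∈ Finset.univ.erase b \ (insert a T), β v) * (x - 1) ^ mrank (pivot M a b) (insert a T) * (y - 1) ^ (((insert a T)).card - mrank (pivot M a b) (insert a T))) := by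
    refine Finset.sum_congr rfl fun T hT => ?_
    have hT' := Finset.mem_powerset.1 hT
    have haT : a ∉ T := fun h => haU12 (hT' h)
    have hbT : b ∉ T := fun h => hbU12 (hT' h)
    have hbS : b ∉ insert a T := by
      rintro h
      rcases Finset.mem_insert.1 h with h' | h'
      · exact hab h'.symm
      · exact hbT h'
    have hr : mrank (pivot M a b) (insert a T) = mrank M (insert a T) :=
      mrank_pivot_single M hM a b ha (Finset.mem_insert_self a T) hbS
    have hmem : b ∈ (Finset.univ : Finset V) \ insert a T :=
      Finset.mem_sdiff.2 ⟨Finset.mem_univ b, hbS⟩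
    rw [hr, ← Finset.insert_erase hmem, ← Finset.erase_sdiff_comm,
      Finset.prod_insert (fun h => (Finset.notMem_erase b Finset.univ) (Finset.mem_sdiff.1 h).1)]
    ring
  have EC : (∑ T ∈ ((Finset.univ.erase a).erase b).powerset, (∏ s ∈ (insert a (insert b T)), α s) * (∏ v ∈ (Finset.univ : Finset V) \ (insert a (insert b T)), β v) * (x - 1) ^ mrank M (insert a (insert b T)) * (y - 1) ^ (((insert a (insert b T))).card - mrank M (insert a (insert b T))))
      = α a * α b * (x - 1) ^ 2 *
          interlaceQ (pivot M a b) ((Finset.univ.erase a).erase b) α β x y := by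
    rw [show interlaceQ (pivot M a b) ((Finset.univ.erase a).erase b) α β x y
        = ∑ T ∈ ((Finset.univ.erase a).erase b).powerset, (∏ s ∈ T, α s) * (∏ v ∈ (Finset.univ.erase a).erase b \ T, β v) * (x - 1) ^ mrank (pivot M a b) T * (y - 1) ^ ((T).card - mrank (pivot M a b) T) from rfl,
      Finset.mul_sum]
    refine Finset.sum_congr rfl fun T hT => ?_
    have hT' := Finset.mem_powerset.1 hT
    have haT : a ∉ T := fun h => haU12 (hT' h)
    have hbT : b ∉ T := fun h => hbU12 (hT' h)
    have hanb : a ∉ insert b T := by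
      rintro h
      rcases Finset.mem_insert.1 h with h' | h'
      · exact hab h'
      · exact haT h'
    have hr : mrank M (insert a (insert b T)) = mrank (pivot M a b) T + 2 :=
      mrank_pivot_pair M hM a b hab ha hb hadj haT hbT
    have hcard : (insert a (insert b T)).card = T.card + 2 := by
      rw [Finset.card_insert_of_notMem hanb, Finset.card_insert_of_notMem hbT]
    have hsd : (Finset.univ : Finset V) \ insert a (insert b T)
        = ((Finset.univ.erase a).erase b) \ T := by
      ext v
      simp only [Finset.mem_sdiff, Finset.mem_univ, true_and, Finset.mem_insert,
        Finset.mem_erase, not_or, and_true]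
      tauto
    rw [hr, hcard, hsd, Nat.add_sub_add_right, Finset.prod_insert hanb,
      Finset.prod_insert hbT, pow_add]
    ring
  have ED : (∑ T ∈ ((Finset.univ.erase a).erase b).powerset, β b * ((∏ s ∈ T, α s) * (∏ v ∈ Finset.univ.erase b \ T, β v) * (x - 1) ^ mrank (pivot M a b) T * (y - 1) ^ ((T).card - mrank (pivot M a b) T)))
      = β a * β b *
          interlaceQ (pivot M a b) ((Finset.univ.erase a).erase b) α β x y := by
    rw [show interlaceQ (pivot M a b) ((Finset.univ.erase a).erase b) α β x y
        = ∑ T ∈ ((Finset.univ.erase a).erase b).powerset, (∏ s ∈ T, α s) * (∏ v ∈ (Finset.univ.erase a).erase b \ T, β v) * (x - 1) ^ mrank (pivot M a b) T * (y - 1) ^ ((T).card - mrank (pivot M a b) T) from rfl,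
      Finset.mul_sum]
    refine Finset.sum_congr rfl fun T hT => ?_
    have haT : a ∉ T := fun h => haU12 (Finset.mem_powerset.1 hT h)
    have hmem : a ∈ Finset.univ.erase b \ T :=
      Finset.mem_sdiff.2 ⟨Finset.mem_erase.2 ⟨hab, Finset.mem_univ a⟩, haT⟩
    rw [← Finset.insert_erase hmem, ← Finset.erase_sdiff_comm, Finset.erase_right_comm,
      Finset.prod_insert (fun h => haU12 (Finset.mem_sdiff.1 h).1)]
    ring
  rw [show interlaceQ M Finset.univ α β x y
      = ∑ S ∈ (Finset.univ : Finset V).powerset, (∏ s ∈ S, α s) * (∏ v ∈ (Finset.univ : Finset V) \ S, β v) * (x - 1) ^ mrank M S * (y - 1) ^ ((S).card - mrank M S) from rfl]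
  rw [step1, EA, EB, EC, stepR, ED]
  ring
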